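/- If two eventually periodic streams s and t of natural numbers are such that t is a tail of s (i.e., t(n) = s(n+1) for all n), then s and t are equivalent in the sense that their periodic parts have the same arithmetic mean. -/
import Mathlib

/-- `IsRep s s₀ s₁` says the stream `s : ℕ → ℕ` is represented as `s = s₀ s₁^ω`,
i.e. `s₁` is a nonempty period repeated forever after the finite prefix `s₀`. -/
def IsRep (s : ℕ → ℕ) (s₀ s₁ : List ℕ) : Prop :=
  s₁ ≠ [] ∧ ∀ n : ℕ, s (s₀.length + n) = s₁.getD (n % s₁.length) 0

lemma sum_getD (l : List ℕ) :
    ∑ i ∈ Finset.range l.length, l.getD i 0 = l.sum := by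
  induction l with
  | nil => simp
  | cons a l ih =>
    rw [List.length_cons, Finset.sum_range_succ']
    simp only [List.getD_cons_succ, List.getD_cons_zero, ih]
    exact Nat.add_comm _ _

lemma sum_getD_mod (l : List ℕ) (hl : l ≠ []) (k : ℕ) :
    ∑ i ∈ Finset.range (k * l.length), l.getD (i % l.length) 0 = k * l.sum := by
  have hp : 0 < l.length := List.length_pos_iff.2 hl
  induction k with
  | zero => simp
  | succ k ih =>
    rw [Nat.succ_mul, Finset.sum_range_add, ih, Nat.succ_mul]
    congr 1
    calc ∑ i ∈ Finset.range l.length, l.getD ((k * l.length + i) % l.length) 0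
        = ∑ i ∈ Finset.range l.length, l.getD i 0 := by
          refine Finset.sum_congr rfl fun i hi => ?_
          rw [Nat.add_comm, Nat.mul_comm, Nat.add_mul_mod_self_left, Nat.mod_eq_of_lt (Finset.mem_range.1 hi)]
      _ = l.sum := sum_getD l

/-- shifting a periodic function doesn't change its sum over a full period -/
lemma sum_shift (f : ℕ → ℕ) (n : ℕ) (hf : ∀ i, f (i + n) = f i) (m : ℕ) :
    ∑ i ∈ Finset.range n, f (m + i) = ∑ i ∈ Finset.range n, f i := by
  induction m with
  | zero => simp
  | succ m ih =>
    rw [← ih]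
    have h1 : ∑ i ∈ Finset.range (n + 1), f (m + i)
        = ∑ i ∈ Finset.range n, f (m + (i + 1)) + f (m + 0) :=
      Finset.sum_range_succ' _ n
    have h2 : ∑ i ∈ Finset.range (n + 1), f (m + i)
        = ∑ i ∈ Finset.range n, f (m + i) + f (m + n) :=
      Finset.sum_range_succ _ n
    have h3 : f (m + n) = f (m + 0) := by rw [Nat.add_zero, hf m]
    have h4 : (∑ i ∈ Finset.range n, f (m + (i + 1)))
        = ∑ i ∈ Finset.range n, f (m + 1 + i) :=
      Finset.sum_congr rfl fun i _ => by rw [Nat.add_comm i 1, ← Nat.add_assoc]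
    rw [h4] at h1
    rw [h3] at h2
    exact Nat.add_right_cancel (h1.symm.trans h2)

/-- If `t` is the tail of an eventually periodic stream `s`, then `s` and `t` are
equivalent: their periodic parts have the same arithmetic mean. -/
theorem tail_equiv (s t : ℕ → ℕ) (htail : ∀ n, t n = s (n + 1))
    (s₀ s₁ t₀ t₁ : List ℕ) (hs : IsRep s s₀ s₁) (ht : IsRep t t₀ t₁) :
    t₁.length * s₁.sum = s₁.length * t₁.sum := by
  obtain ⟨hs1, hsP⟩ := hs
  obtain ⟨ht1, htP⟩ := ht
  have hp : 0 < s₁.length := List.length_pos_iff.2 hs1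
  have hq : 0 < t₁.length := List.length_pos_iff.2 ht1
  set k := t₀.length + 1 with hk
  have hkp : k ≤ k * s₁.length := Nat.le_mul_of_pos_right k hp
  obtain ⟨m, hm⟩ : ∃ m, s₀.length + k * s₁.length = t₀.length + m + 1 :=
    ⟨s₀.length + k * s₁.length - t₀.length - 1, by omega⟩
  have key1 : ∑ i ∈ Finset.range (t₁.length * s₁.length),
      s (s₀.length + k * s₁.length + i) = t₁.length * s₁.sum := by
    have e1 : ∀ i, s (s₀.length + k * s₁.length + i)
        = s₁.getD ((k * s₁.length + i) % s₁.length) 0 := fun i => by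
      rw [Nat.add_assoc]; exact hsP (k * s₁.length + i)
    have hper : ∀ i, s₁.getD ((i + t₁.length * s₁.length) % s₁.length) 0
        = s₁.getD (i % s₁.length) 0 := fun i => by
      rw [Nat.mul_comm t₁.length s₁.length, Nat.add_mul_mod_self_left]
    calc ∑ i ∈ Finset.range (t₁.length * s₁.length), s (s₀.length + k * s₁.length + i)
        = ∑ i ∈ Finset.range (t₁.length * s₁.length),
            s₁.getD ((k * s₁.length + i) % s₁.length) 0 :=
          Finset.sum_congr rfl fun i _ => e1 i
      _ = ∑ i ∈ Finset.range (t₁.length * s₁.length), s₁.getD (i % s₁.length) 0 :=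
          sum_shift (fun i => s₁.getD (i % s₁.length) 0) _ hper (k * s₁.length)
      _ = t₁.length * s₁.sum := sum_getD_mod s₁ hs1 t₁.length
  have key2 : ∑ i ∈ Finset.range (t₁.length * s₁.length),
      s (s₀.length + k * s₁.length + i)
      = ∑ i ∈ Finset.range (t₁.length * s₁.length), t (t₀.length + (m + i)) :=
    Finset.sum_congr rfl fun i _ => by rw [htail]; congr 1; omega
  have key3 : ∑ i ∈ Finset.range (t₁.length * s₁.length), t (t₀.length + (m + i))
      = s₁.length * t₁.sum := by
    have hper : ∀ i, t₁.getD ((i + t₁.length * s₁.length) % t₁.length) 0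
        = t₁.getD (i % t₁.length) 0 := fun i => by
      rw [Nat.add_mul_mod_self_left]
    calc ∑ i ∈ Finset.range (t₁.length * s₁.length), t (t₀.length + (m + i))
        = ∑ i ∈ Finset.range (t₁.length * s₁.length),
            t₁.getD ((m + i) % t₁.length) 0 :=
          Finset.sum_congr rfl fun i _ => htP (m + i)
      _ = ∑ i ∈ Finset.range (t₁.length * s₁.length), t₁.getD (i % t₁.length) 0 :=
          sum_shift (fun i => t₁.getD (i % t₁.length) 0) _ hper m
      _ = s₁.length * t₁.sum := by
          rw [Nat.mul_comm t₁.length s₁.length]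
          exact sum_getD_mod t₁ ht1 s₁.length
  rw [← key1, key2, key3]
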